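/- Let S be a local ring which is a unique factorization domain and let p be a nonzero ideal of S. Then one can write pS = gI where g ∈ S and I ⊆ S is an ideal of height ≥ 2, and the set U = {Q ∈ Spec(S) : pS_Q is invertible} equals Spec(S) − V(I). -/
import Mathlib


namespace SimultaneousResolution

open Ideal

theorem gcd_extract (S : Type) [CommRing S] [IsDomain S] [UniqueFactorizationMonoid S]
    (p : Ideal S) (hp : p ≠ 0) :
    ∃ g a : S, a ∈ p ∧ a ≠ 0 ∧ g ∣ a ∧ (∀ x ∈ p, g ∣ x) ∧
      ∀ q : S, Prime q → ¬ (∀ x ∈ p, g * q ∣ x) := by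
  obtain ⟨a, hap, ha0⟩ := Submodule.exists_mem_ne_zero_of_ne_bot hp
  set T : Set S := {c | ∃ g : S, g * c = a ∧ ∀ x ∈ p, g ∣ x} with hT
  have hTne : T.Nonempty := ⟨a, 1, one_mul a, fun x _ => one_dvd x⟩
  obtain ⟨c, ⟨g, hgc, hgdvd⟩, hmin⟩ := (wellFounded_dvdNotUnit (α := S)).has_min T hTne
  have hc0 : c ≠ 0 := fun h => ha0 (by rw [← hgc, h, mul_zero])
  have hg0 : g ≠ 0 := fun h => ha0 (by rw [← hgc, h, zero_mul])
  refine ⟨g, a, hap, ha0, ⟨c, hgc.symm⟩, hgdvd, fun q hq hdvd => ?_⟩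
  obtain ⟨c', hc'⟩ : q ∣ c := by
    obtain ⟨d, hd⟩ := hdvd a hap
    have : g * c = g * (q * d) := by rw [hgc, hd]; ring
    exact ⟨d, mul_left_cancel₀ hg0 this⟩
  have hc'T : c' ∈ T := ⟨g * q, by rw [← hgc, hc']; ring,
    fun x hx => hdvd x hx⟩
  exact hmin c' hc'T ⟨fun h => hc0 (by rw [hc', h, mul_zero]), q, hq.not_unit, by rw [hc']; ring⟩

theorem prime_factor_mem {S : Type} [CommRing S] [IsDomain S] [UniqueFactorizationMonoid S]
    {Q : Ideal S} (hQ : Q.IsPrime) {c : S} (hc : c ∈ Q) (hc0 : c ≠ 0) :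
    ∃ q : S, Prime q ∧ q ∣ c ∧ q ∈ Q := by
  classical
  obtain ⟨u, hu⟩ := UniqueFactorizationMonoid.factors_prod hc0
  have hprod : (UniqueFactorizationMonoid.factors c).prod ∈ Q := by
    rwa [← hu, mul_unit_mem_iff_mem _ u.isUnit] at hc
  obtain ⟨q, hq1, hq2⟩ := (hQ.multiset_prod_mem_iff_exists_mem _).1 hprod
  exact ⟨q, UniqueFactorizationMonoid.prime_of_factor q hq1,
    (Multiset.dvd_prod hq1).trans (Dvd.intro _ hu), hq2⟩


/-- Let `S` be a local ring which is a unique factorization domain and let `p` be a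
nonzero ideal of `S`.  Then one can write `p S = g I` with `g ∈ S` and `I ⊆ S` an ideal of
height at least `2` (every prime containing `I` admits a chain of two strictly smaller
primes below it), and the set `U = {Q ∈ Spec S : p S_Q is invertible}` equals
`Spec S − V(I)`. -/
theorem exists_factorization_ufd
    (S : Type) [CommRing S] [IsDomain S] [IsLocalRing S] [UniqueFactorizationMonoid S]
    (p : Ideal S) (hp : p ≠ 0) :
    ∃ (g : S) (I : Ideal S),
      p = Ideal.span ({g} : Set S) * I ∧
      (∀ Q : Ideal S, Q.IsPrime → I ≤ Q →
        ∃ q₀ q₁ : Ideal S, q₀.IsPrime ∧ q₁.IsPrime ∧ q₀ < q₁ ∧ q₁ < Q) ∧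
      ∀ Q : PrimeSpectrum S,
        (∃ x ∈ nonZeroDivisors (Localization.AtPrime Q.asIdeal),
            Ideal.map (algebraMap S (Localization.AtPrime Q.asIdeal)) p =
              Ideal.span {x}) ↔
          ¬ I ≤ Q.asIdeal := by
  classical
  obtain ⟨g, a, hap, ha0, hga, hgdvd, hmax⟩ := gcd_extract S p hp
  have hg0 : g ≠ 0 := fun h => ha0 (zero_dvd_iff.1 (h ▸ hga))
  set I := p.colon (Ideal.span {g}) with hIdef
  have hmemI : ∀ y : S, y ∈ I ↔ g * y ∈ p := fun y => by rw [hIdef, Ideal.mem_colon_span_singleton, mul_comm]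
  -- factorization
  have hfact : p = Ideal.span {g} * I := by
    apply le_antisymm
    · intro x hx
      obtain ⟨y, hy⟩ := hgdvd x hx
      have hyI : y ∈ I := (hmemI y).2 (hy ▸ hx)
      rw [hy]
      exact Ideal.mul_mem_mul (Ideal.mem_span_singleton_self g) hyI
    · rw [Ideal.span_singleton_mul_le_iff]
      intro y hy
      exact (hmemI y).1 hy
  -- I is not contained in any principal prime
  have hkey : ∀ q : S, Prime q → ¬ I ≤ Ideal.span {q} := by
    intro q hq hle
    refine hmax q hq fun x hx => ?_
    obtain ⟨y, hy⟩ := hgdvd x hx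
    have hyI : y ∈ I := (hmemI y).2 (hy ▸ hx)
    obtain ⟨z, hz⟩ := Ideal.mem_span_singleton'.1 (hle hyI)
    exact ⟨z, by rw [hy, ← hz]; ring⟩
  -- a = g * c with c ∈ I, c ≠ 0
  obtain ⟨c, hc⟩ := hgdvd a hap
  have hcI : c ∈ I := (hmemI c).2 (hc ▸ hap)
  have hc0 : c ≠ 0 := fun h => ha0 (by rw [hc, h, mul_zero])
  refine ⟨g, I, hfact, ?_, ?_⟩
  · -- height ≥ 2
    intro Q hQ hIQ
    have hQbot : Q ≠ ⊥ := fun h => hc0 (by simpa [h] using hIQ hcI)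
    obtain ⟨q, hqQ, hq⟩ := hQ.exists_mem_prime_of_ne_bot hQbot
    have hq0 : q ≠ 0 := hq.ne_zero
    refine ⟨⊥, Ideal.span {q}, Ideal.bot_prime,
      (Ideal.span_singleton_prime hq0).2 hq, ?_, ?_⟩
    · exact bot_lt_iff_ne_bot.2 (fun h => hq0 (Ideal.span_singleton_eq_bot.1 h))
    · refine lt_of_le_of_ne (((Ideal.span_singleton_le_iff_mem Q).2 hqQ)) ?_
      intro h
      exact hkey q hq (h ▸ hIQ)
  · -- localization statement
    intro Q
    haveI hQp : Q.asIdeal.IsPrime := Q.2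
    have finj : Function.Injective (algebraMap S (Localization.AtPrime Q.asIdeal)) :=
      IsLocalization.injective _ Q.asIdeal.primeCompl_le_nonZeroDivisors
    have hg'0 : algebraMap S (Localization.AtPrime Q.asIdeal) g ≠ 0 :=
      fun h => hg0 (finj (by rw [h, map_zero]))
    have hnd : ∀ w : Q.asIdeal.primeCompl, ∀ q : S, q ∈ Q.asIdeal → ¬ q ∣ (w : S) := by
      rintro w q hq ⟨m, hm⟩
      exact w.2 (by rw [hm]; exact Q.asIdeal.mul_mem_right m hq)
    constructor
    · rintro ⟨x, hxnzd, hxmap⟩ hIQ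
      have hx0 : x ≠ 0 := nonZeroDivisors.ne_zero hxnzd
      set f := algebraMap S (Localization.AtPrime Q.asIdeal) with hf
      set J := Ideal.map f I with hJdef
      have hmapfact : Ideal.span {f g} * J = Ideal.span {x} := by
        rw [hJdef, ← hxmap, hfact, Ideal.map_mul, Ideal.map_span, Set.image_singleton]
      have hxmem : x ∈ Ideal.span {f g} * J := by
        rw [hmapfact]; exact Ideal.mem_span_singleton_self x
      obtain ⟨t, htJ, hxt⟩ := Ideal.mem_span_singleton_mul.1 hxmem
      have ht0 : t ≠ 0 := fun h => hx0 (by rw [← hxt, h, mul_zero])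
      have hJle : J ≤ Ideal.span {t} := by
        intro j hj
        have hmem : f g * j ∈ Ideal.span {x} := by
          rw [← hmapfact]
          exact Ideal.mul_mem_mul (Ideal.mem_span_singleton_self _) hj
        obtain ⟨s, hs⟩ := Ideal.mem_span_singleton'.1 hmem
        rw [← hxt] at hs
        have hj' : j = t * s := mul_left_cancel₀ hg'0 (by rw [← hs]; ring)
        exact Ideal.mem_span_singleton'.2 ⟨s, by rw [hj']; ring⟩
      obtain ⟨⟨⟨i, hiI⟩, s⟩, hts⟩ :=
        (IsLocalization.mem_map_algebraMap_iff Q.asIdeal.primeCompl _).1 htJ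
      simp only at hts
      have hs0 : f (s : S) ≠ 0 := fun h => by
        have : (s : S) = 0 := finj (by rw [h, map_zero])
        exact s.2 (by rw [this]; exact Q.asIdeal.zero_mem)
      have hi0 : i ≠ 0 := by
        intro h
        rw [h, map_zero] at hts
        rcases mul_eq_zero.1 hts with h' | h'
        · exact ht0 h'
        · exact hs0 h'
      obtain ⟨q, hqprime, hqi, hqQ⟩ := prime_factor_mem hQp (hIQ hiI) hi0
      refine hkey q hqprime fun y hyI => ?_
      obtain ⟨z, hz⟩ := Ideal.mem_span_singleton'.1 (hJle (Ideal.mem_map_of_mem f hyI))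
      obtain ⟨⟨cz, wz⟩, hzw⟩ := IsLocalization.surj Q.asIdeal.primeCompl z
      simp only at hzw
      rw [← hf] at hts hzw
      have h1 : f (y * s * wz) = f (i * cz) := by
        rw [_root_.map_mul, _root_.map_mul, _root_.map_mul, ← hz, ← hts, ← hzw]; ring
      obtain ⟨v, hv⟩ := (IsLocalization.eq_iff_exists Q.asIdeal.primeCompl _).1 h1
      have hdv : q ∣ (v : S) * (y * s * wz) := by
        rw [hv]
        exact Dvd.dvd.mul_left (hqi.mul_right cz) v
      have h2 : q ∣ y * (s : S) * wz :=
        (hqprime.dvd_or_dvd hdv).resolve_left (hnd v q hqQ)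
      have h3 : q ∣ y * (s : S) :=
        (hqprime.dvd_or_dvd h2).resolve_right (hnd wz q hqQ)
      have h4 : q ∣ y := (hqprime.dvd_or_dvd h3).resolve_right (hnd s q hqQ)
      exact Ideal.mem_span_singleton.2 h4
    · intro hIQ
      obtain ⟨y, hyI, hyQ⟩ := SetLike.not_le_iff_exists.1 hIQ
      refine ⟨algebraMap S (Localization.AtPrime Q.asIdeal) g,
        mem_nonZeroDivisors_of_ne_zero hg'0, ?_⟩
      have hItop : Ideal.map (algebraMap S (Localization.AtPrime Q.asIdeal)) I = ⊤ :=
        Ideal.eq_top_of_isUnit_mem _ (Ideal.mem_map_of_mem _ hyI)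
          (IsLocalization.map_units _ (⟨y, hyQ⟩ : Q.asIdeal.primeCompl))
      rw [hfact, Ideal.map_mul, hItop, Ideal.mul_top, Ideal.map_span, Set.image_singleton]

end SimultaneousResolution
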